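/- Maximum principle for the fractional Laplacian: let Ω ⊂ ℝⁿ be a bounded domain and 0 < α < 2. Suppose u ∈ L_α(ℝⁿ) ∩ C^{1,1}_{loc}(Ω) is lower semicontinuous on the closure of Ω, (-Δ)^{α/2} u ≥ 0 in Ω, and u ≥ 0 in ℝⁿ \ Ω. Then u ≥ 0 in ℝⁿ. Moreover, if u(x₀) = 0 for some x₀ ∈ Ω, then u = 0 almost everywhere in ℝⁿ. -/

import Mathlib

open MeasureTheory Set Filter Topology

/-!
At a global minimum `x` of `u` the integrand `(u x - u y) / ‖x - y‖ ^ (n + α)` is nonpositive, so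
the truncated integrals over `{ε ≤ ‖y - x‖}` are nonpositive and decrease as `ε ↓ 0`. A
nonnegative principal value therefore forces all of them to vanish, whence `u = u x` almost
everywhere. If `u` took a negative value, lower semicontinuity on the compact set `closure Ω` and
`u ≥ 0` off `Ω` would produce such a minimum inside `Ω` with `u x < 0`; then `u < 0` almost
everywhere, contradicting `u ≥ 0` on `Ωᶜ`, which has infinite measure.
-/

theorem one_add_rpow_neg_le_two_div {t p : ℝ} (ht : 0 ≤ t) (hp : 0 ≤ p) :
    (1 + t) ^ (-p) ≤ 2 / (1 + t ^ p) := by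
  have h1 : 1 ≤ (1 + t) ^ p := Real.one_le_rpow (by linarith) hp
  have h2 : t ^ p ≤ (1 + t) ^ p := Real.rpow_le_rpow ht (by linarith) hp
  rw [Real.rpow_neg (by linarith), le_div_iff₀ (by positivity), inv_mul_le_iff₀ (by positivity)]
  linarith

section Truncated

variable {E : Type*} [NormedAddCommGroup E]

theorem inv_norm_sub_rpow_le {x y : E} {ε p : ℝ} (hε : 0 < ε) (hp : 0 ≤ p)
    (hy : ε ≤ ‖y - x‖) :
    (‖x - y‖ ^ p)⁻¹ ≤ ((1 + ‖x‖) / ε + 1) ^ p * (1 + ‖y‖) ^ (-p) := by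
  rw [norm_sub_rev] at hy
  have hxy : 0 < ‖x - y‖ := hε.trans_le hy
  have hle : 1 + ‖y‖ ≤ ‖x - y‖ * ((1 + ‖x‖) / ε + 1) := by
    have htri : ‖y‖ ≤ ‖x‖ + ‖x - y‖ := by
      simpa using norm_sub_le x (x - y)
    have hscale : 1 + ‖x‖ ≤ (1 + ‖x‖) / ε * ‖x - y‖ := by
      rw [div_mul_eq_mul_div, le_div_iff₀ hε]
      exact mul_le_mul_of_nonneg_left hy (by positivity)
    linarith
  rw [Real.rpow_neg (by positivity), ← div_eq_mul_inv,
    le_div_iff₀ (Real.rpow_pos_of_pos (by positivity) p),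
    inv_mul_le_iff₀ (Real.rpow_pos_of_pos hxy p), ← Real.mul_rpow hxy.le (by positivity)]
  exact Real.rpow_le_rpow (by positivity) hle hp

theorem fracLaplacian_integrand_nonpos {u : E → ℝ} {x : E} (hmin : ∀ y, u x ≤ u y) (p : ℝ)
    (y : E) : (u x - u y) / ‖x - y‖ ^ p ≤ 0 :=
  div_nonpos_of_nonpos_of_nonneg (sub_nonpos.mpr (hmin y)) (by positivity)

variable [MeasurableSpace E] [BorelSpace E] {μ : Measure E} {p : ℝ} {u : E → ℝ}

theorem measurableSet_le_norm_sub (x : E) (ε : ℝ) : MeasurableSet {y : E | ε ≤ ‖y - x‖} :=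
  (isClosed_le continuous_const (continuous_id.sub continuous_const).norm).measurableSet

theorem aestronglyMeasurable_of_integrable_div_one_add_norm_rpow
    (hu : Integrable (fun y ↦ u y / (1 + ‖y‖ ^ p)) μ) : AEStronglyMeasurable u μ := by
  refine (hu.aestronglyMeasurable.mul (Measurable.aestronglyMeasurable (f := fun y : E ↦
    1 + ‖y‖ ^ p) (by fun_prop))).congr (Eventually.of_forall fun y ↦ ?_)
  have : (0 : ℝ) < 1 + ‖y‖ ^ p := by positivity
  simp only [Pi.mul_apply]
  field_simp

/-- The truncation at radius `ε` of the principal value defining `(-Δ)^{α/2} u x`, with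
`p = n + α` and without the normalising constant. -/
noncomputable def truncatedFracLaplacian (μ : Measure E) (p : ℝ) (u : E → ℝ) (x : E) (ε : ℝ) :
    ℝ :=
  ∫ y in {y | ε ≤ ‖y - x‖}, (u x - u y) / ‖x - y‖ ^ p ∂μ

variable [NormedSpace ℝ E] [FiniteDimensional ℝ E] [μ.IsAddHaarMeasure]

theorem integrableOn_fracLaplacian_integrand (hp : (Module.finrank ℝ E : ℝ) < p)
    (hu : Integrable (fun y ↦ u y / (1 + ‖y‖ ^ p)) μ) (x : E) {ε : ℝ} (hε : 0 < ε) :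
    IntegrableOn (fun y ↦ (u x - u y) / ‖x - y‖ ^ p) {y | ε ≤ ‖y - x‖} μ := by
  have hp0 : 0 ≤ p := (Nat.cast_nonneg _).trans hp.le
  set C := ((1 + ‖x‖) / ε + 1) ^ p
  have hbound : ∀ y ∈ {y | ε ≤ ‖y - x‖}, ‖(u x - u y) / ‖x - y‖ ^ p‖ ≤
      C * (|u x| * (1 + ‖y‖) ^ (-p) + 2 * ‖u y / (1 + ‖y‖ ^ p)‖) := by
    intro y hy
    have hK := inv_norm_sub_rpow_le hε hp0 hy
    have hw := one_add_rpow_neg_le_two_div (norm_nonneg y) hp0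
    have hC : 0 ≤ C := by positivity
    rw [Real.norm_eq_abs, Real.norm_eq_abs, abs_div, abs_div,
      abs_of_pos (by positivity : (0 : ℝ) < 1 + ‖y‖ ^ p),
      abs_of_nonneg (by positivity : (0 : ℝ) ≤ ‖x - y‖ ^ p), div_eq_mul_inv]
    calc |u x - u y| * (‖x - y‖ ^ p)⁻¹
        ≤ (|u x| + |u y|) * (C * (1 + ‖y‖) ^ (-p)) :=
          mul_le_mul (abs_sub _ _) hK (by positivity) (by positivity)
      _ ≤ C * (|u x| * (1 + ‖y‖) ^ (-p) + |u y| * (2 / (1 + ‖y‖ ^ p))) := by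
          have := mul_le_mul_of_nonneg_left hw (mul_nonneg hC (abs_nonneg (u y)))
          nlinarith
      _ = C * (|u x| * (1 + ‖y‖) ^ (-p) + 2 * (|u y| / (1 + ‖y‖ ^ p))) := by ring
  have hmeas := aestronglyMeasurable_of_integrable_div_one_add_norm_rpow hu
  refine Integrable.mono' ((((integrable_one_add_norm hp).const_mul |u x|).add
    (hu.norm.const_mul 2)).const_mul C).integrableOn ?_
    ((ae_restrict_iff' (measurableSet_le_norm_sub x ε)).mpr (Eventually.of_forall hbound))
  exact ((aestronglyMeasurable_const.sub hmeas).div₀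
    (Measurable.aestronglyMeasurable (f := fun y ↦ ‖x - y‖ ^ p) (by fun_prop))).restrict

section Minimum

variable (hp : (Module.finrank ℝ E : ℝ) < p) (hu : Integrable (fun y ↦ u y / (1 + ‖y‖ ^ p)) μ)
  {x : E} (hmin : ∀ y, u x ≤ u y)
include hmin

omit [NormedSpace ℝ E] [FiniteDimensional ℝ E] [μ.IsAddHaarMeasure] in
theorem truncatedFracLaplacian_nonpos (ε : ℝ) : truncatedFracLaplacian μ p u x ε ≤ 0 :=
  setIntegral_nonpos (measurableSet_le_norm_sub x ε)
    fun y _ ↦ fracLaplacian_integrand_nonpos hmin p y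

include hp hu

theorem truncatedFracLaplacian_mono {ε ε' : ℝ} (hε' : 0 < ε') (hle : ε' ≤ ε) :
    truncatedFracLaplacian μ p u x ε' ≤ truncatedFracLaplacian μ p u x ε := by
  have h := setIntegral_mono_set (integrableOn_fracLaplacian_integrand hp hu x hε').neg
    (Eventually.of_forall fun y ↦ neg_nonneg.mpr (fracLaplacian_integrand_nonpos hmin p y))
    (Eventually.of_forall fun y (hy : ε ≤ ‖y - x‖) ↦ hle.trans hy)
  simp only [Pi.neg_apply, integral_neg, neg_le_neg_iff] at h
  exact h

theorem truncatedFracLaplacian_eq_zero {L : ℝ} (hL : 0 ≤ L)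
    (hlim : Tendsto (truncatedFracLaplacian μ p u x) (𝓝[>] 0) (𝓝 L)) {ε : ℝ} (hε : 0 < ε) :
    truncatedFracLaplacian μ p u x ε = 0 := by
  have hLle : L ≤ truncatedFracLaplacian μ p u x ε := le_of_tendsto hlim <| by
    filter_upwards [Ioc_mem_nhdsGT hε] with ε' hε'
    exact truncatedFracLaplacian_mono hp hu hmin hε'.1 hε'.2
  linarith [truncatedFracLaplacian_nonpos hmin (μ := μ) (p := p) ε]

theorem ae_eq_on_le_norm_sub_of_truncatedFracLaplacian_eq_zero {ε : ℝ} (hε : 0 < ε)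
    (hzero : truncatedFracLaplacian μ p u x ε = 0) :
    ∀ᵐ y ∂μ, ε ≤ ‖y - x‖ → u y = u x := by
  have h := (setIntegral_eq_zero_iff_of_nonneg_ae
    (Eventually.of_forall fun y ↦ neg_nonneg.mpr (fracLaplacian_integrand_nonpos hmin p y))
    (integrableOn_fracLaplacian_integrand hp hu x hε).neg).mp
    (by rw [integral_neg]; exact neg_eq_zero.mpr hzero)
  filter_upwards [(ae_restrict_iff' (measurableSet_le_norm_sub x ε)).mp h] with y hy hyε
  have hxy : ‖x - y‖ ^ p ≠ 0 :=
    (Real.rpow_pos_of_pos ((norm_sub_rev x y).symm ▸ hε.trans_le hyε) p).ne'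
  have := hy hyε
  simp only [Pi.zero_apply, neg_eq_zero, div_eq_zero_iff, hxy, or_false,
    sub_eq_zero] at this
  exact this.symm

theorem ae_eq_of_tendsto_truncatedFracLaplacian {L : ℝ} (hL : 0 ≤ L)
    (hlim : Tendsto (truncatedFracLaplacian μ p u x) (𝓝[>] 0) (𝓝 L)) :
    ∀ᵐ y ∂μ, u y = u x := by
  have h : ∀ᵐ y ∂μ, ∀ k : ℕ, 1 / ((k : ℝ) + 1) ≤ ‖y - x‖ → u y = u x :=
    ae_all_iff.mpr fun k ↦ ae_eq_on_le_norm_sub_of_truncatedFracLaplacian_eq_zero hp hu hmin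
      (by positivity) (truncatedFracLaplacian_eq_zero hp hu hmin hL hlim (by positivity))
  filter_upwards [h] with y hy
  rcases eq_or_ne y x with rfl | hyx
  · rfl
  · obtain ⟨k, hk⟩ := exists_nat_one_div_lt (norm_pos_iff.mpr (sub_ne_zero.mpr hyx))
    exact hy k hk.le

end Minimum

end Truncated

theorem Bornology.IsBounded.measure_compl_ne_zero {E : Type*} [NormedAddCommGroup E]
    [NormedSpace ℝ E] [FiniteDimensional ℝ E] [Nontrivial E] [MeasurableSpace E] [BorelSpace E]
    (μ : Measure E) [μ.IsAddHaarMeasure] {s : Set E} (hs : Bornology.IsBounded s) :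
    μ sᶜ ≠ 0 := by
  intro hzero
  have hle := measure_univ_le_add_compl (μ := μ) s
  rw [measure_univ_of_isAddLeftInvariant, hzero, add_zero] at hle
  exact (hs.measure_lt_top (μ := μ)).ne (top_le_iff.mp hle)

theorem integrable_div_one_add_norm_rpow_of_lintegral_lt_top {E : Type*} [NormedAddCommGroup E]
    [MeasurableSpace E] [BorelSpace E] {μ : Measure E} {u : E → ℝ} {p : ℝ} (hmeas : Measurable u)
    (hfin : ∫⁻ y, ENNReal.ofReal (|u y| / (1 + ‖y‖ ^ p)) ∂μ < ⊤) :
    Integrable (fun y ↦ u y / (1 + ‖y‖ ^ p)) μ := by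
  have hm : AEStronglyMeasurable (fun y ↦ u y / (1 + ‖y‖ ^ p)) μ :=
    (by fun_prop : Measurable fun y ↦ u y / (1 + ‖y‖ ^ p)).aestronglyMeasurable
  refine (integrable_norm_iff hm).mp ⟨hm.norm, ?_⟩
  have hnorm : ∀ y, ‖u y / (1 + ‖y‖ ^ p)‖ = |u y| / (1 + ‖y‖ ^ p) := fun y ↦ by
    rw [Real.norm_eq_abs, abs_div, abs_of_pos (by positivity : (0 : ℝ) < 1 + ‖y‖ ^ p)]
  simp only [hnorm]
  exact (hasFiniteIntegral_iff_ofReal (Eventually.of_forall fun y ↦ by positivity)).mpr hfin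

theorem stmt_19 (n : ℕ) (hn : 1 ≤ n) (α : ℝ) (hα0 : 0 < α)
    (Ω : Set (EuclideanSpace ℝ (Fin n)))
    (hbdd : Bornology.IsBounded Ω)
    (u : EuclideanSpace ℝ (Fin n) → ℝ) (hmeas : Measurable u)
    -- `u ∈ L_α(ℝⁿ)`
    (hLα : (∫⁻ x : EuclideanSpace ℝ (Fin n),
      ENNReal.ofReal (|u x| / (1 + ‖x‖ ^ ((n : ℝ) + α)))) < ⊤)
    -- `u` lower semicontinuous on `closure Ω`
    (hlsc : LowerSemicontinuousOn u (closure Ω))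
    -- `(-Δ)^{α/2} u ≥ 0` in `Ω`: the principal value
    -- `P.V. ∫ (u(x)-u(y))/|x-y|^{n+α} dy` exists and is nonnegative
    (hfrac : ∀ x ∈ Ω, ∃ L : ℝ, 0 ≤ L ∧
      Tendsto (fun ε : ℝ =>
          ∫ y in {y : EuclideanSpace ℝ (Fin n) | ε ≤ ‖y - x‖},
            (u x - u y) / ‖x - y‖ ^ ((n : ℝ) + α))
        (nhdsWithin 0 (Ioi 0)) (nhds L))
    -- `u ≥ 0` outside `Ω`
    (hout : ∀ x, x ∉ Ω → 0 ≤ u x) :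
    (∀ x, 0 ≤ u x) ∧ (∀ x₀ ∈ Ω, u x₀ = 0 → ∀ᵐ x : EuclideanSpace ℝ (Fin n), u x = 0) := by
  have : Nonempty (Fin n) := ⟨⟨0, hn⟩⟩
  have hp : (Module.finrank ℝ (EuclideanSpace ℝ (Fin n)) : ℝ) < n + α := by
    rw [finrank_euclideanSpace_fin]; linarith
  have hu := integrable_div_one_add_norm_rpow_of_lintegral_lt_top hmeas hLα
  have hconst : ∀ x ∈ Ω, (∀ y, u x ≤ u y) → ∀ᵐ y, u y = u x := fun x hx hmin ↦
    let ⟨_, hL, hlim⟩ := hfrac x hx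
    ae_eq_of_tendsto_truncatedFracLaplacian hp hu hmin hL hlim
  have hnonneg : ∀ x, 0 ≤ u x := by
    by_contra! ⟨z, hz⟩
    have hzΩ : z ∈ Ω := by_contra fun h ↦ (hout z h).not_gt hz
    obtain ⟨x, -, hmin⟩ :=
      hlsc.exists_isMinOn ⟨z, subset_closure hzΩ⟩ hbdd.isCompact_closure
    have hx : u x < 0 := (hmin (subset_closure hzΩ)).trans_lt hz
    have hxΩ : x ∈ Ω := by_contra fun h ↦ (hout x h).not_gt hx
    have hglobal : ∀ y, u x ≤ u y := fun y ↦ by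
      by_cases hy : y ∈ Ω
      · exact hmin (subset_closure hy)
      · exact hx.le.trans (hout y hy)
    refine hbdd.measure_compl_ne_zero volume (measure_eq_zero_iff_ae_notMem.mpr ?_)
    filter_upwards [hconst x hxΩ hglobal] with y hy hyΩ
    linarith [hout y hyΩ]
  refine ⟨hnonneg, fun x₀ hx₀ hux₀ ↦ ?_⟩
  simpa only [hux₀] using hconst x₀ hx₀ fun y ↦ hux₀ ▸ hnonneg y
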